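/- Cycles rule. Let G be a simple directed graph on [n] with CTLN parameters in the legal range, and let σ ⊆ [n] with |σ| = m ≥ 3 be a cycle: the vertices of σ can be enumerated v_1,…,v_m so that the edges of the induced subgraph G|_σ are exactly v_1→v_2, v_2→v_3, …, v_{m−1}→v_m, v_m→v_1. Then σ ∈ FP(G) if and only if every k ∈ [n] ∖ σ receives at most one edge from σ (|{i ∈ σ : i→k}| ≤ 1). Furthermore, when σ ∈ FP(G): the matrix −I + W_σ has an eigenvalue with positive real part (the fixed point is unstable), yet det(I − W_σ) > 0. -/

import Mathlib

open Matrix Finset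

/-- `x` is a fixed point of the TLN `(W, b)` restricted to the subset `τ` of neurons
(coordinates outside `τ` are held at zero): for `i ∈ τ`,
`x i = [∑_{j ∈ τ} W i j * x j + b i]_+`. -/
def IsRestFixedPoint {n : ℕ} (W : Matrix (Fin n) (Fin n) ℝ) (b : Fin n → ℝ)
    (τ : Finset (Fin n)) (x : Fin n → ℝ) : Prop :=
  (∀ i ∈ τ, x i = max 0 (∑ j ∈ τ, W i j * x j + b i)) ∧ ∀ i ∉ τ, x i = 0

/-- `σ ∈ FP(W_τ, b_τ)` : `σ` is the support of a fixed point of the restriction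
of the TLN `(W, b)` to `τ`. -/
def memFP {n : ℕ} (W : Matrix (Fin n) (Fin n) ℝ) (b : Fin n → ℝ)
    (τ σ : Finset (Fin n)) : Prop :=
  ∃ x : Fin n → ℝ, IsRestFixedPoint W b τ x ∧ ∀ i, 0 < x i ↔ i ∈ σ

/-- `det (I - W_σ)`, the determinant of the principal submatrix on `σ`. -/
noncomputable def detIW {n : ℕ} (W : Matrix (Fin n) (Fin n) ℝ) (σ : Finset (Fin n)) : ℝ :=
  ((1 : Matrix {x // x ∈ σ} {x // x ∈ σ} ℝ) - W.submatrix Subtype.val Subtype.val).det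

/-- The Cramer determinant `s_i^σ := det ((I − W_{σ∪{i}})_i ; b_{σ∪{i}})`:
the matrix `I − W` restricted to `σ ∪ {i}`, with the column indexed by `i`
replaced by `b` restricted to `σ ∪ {i}`. -/
noncomputable def cramerDet {n : ℕ} (W : Matrix (Fin n) (Fin n) ℝ) (b : Fin n → ℝ)
    (σ : Finset (Fin n)) (i : Fin n) : ℝ :=
  (Matrix.updateCol
      ((1 : Matrix {x // x ∈ insert i σ} {x // x ∈ insert i σ} ℝ)
        - W.submatrix Subtype.val Subtype.val)
      ⟨i, Finset.mem_insert_self i σ⟩ (fun p => b p.val)).det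

/-- The TLN `(W, b)` is competitive. -/
def Competitive {n : ℕ} (W : Matrix (Fin n) (Fin n) ℝ) (b : Fin n → ℝ) : Prop :=
  (∀ i j, W i j ≤ 0) ∧ (∀ i, W i i = 0) ∧ (∀ i, 0 ≤ b i)

/-- The TLN `(W, b)` is nondegenerate. -/
def Nondegenerate {n : ℕ} (W : Matrix (Fin n) (Fin n) ℝ) (b : Fin n → ℝ) : Prop :=
  (∃ i, 0 < b i) ∧ (∀ σ : Finset (Fin n), detIW W σ ≠ 0) ∧
  (∀ σ : Finset (Fin n), (∀ i ∈ σ, 0 < b i) → ∀ i ∈ σ, cramerDet W b σ i ≠ 0)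

/-- The CTLN connectivity matrix of the simple directed graph `G`
(here `G j i` means there is an edge `j → i` in `G`). -/
def ctlnW {n : ℕ} (G : Fin n → Fin n → Prop) [DecidableRel G] (ε δ : ℝ) :
    Matrix (Fin n) (Fin n) ℝ :=
  Matrix.of fun i j => if i = j then 0 else if G j i then -1 + ε else -1 - δ

/-- `k` graphically dominates `j` with respect to `σ`, in the directed graph `G`
(where `G a b` means there is an edge `a → b`). -/
def GraphDominates {α : Type*} (G : α → α → Prop) (σ : Finset α) (k j : α) : Prop :=
  (j ∈ σ ∨ k ∈ σ) ∧
  (∀ i ∈ σ, i ≠ j → i ≠ k → G i j → G i k) ∧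
  (j ∈ σ → G j k) ∧ (k ∈ σ → ¬ G k j)

/-- `w_j^σ := ∑_{i ∈ σ} (−I + W)_{j i} · |s_i^σ|`. -/
noncomputable def wval {n : ℕ} (W : Matrix (Fin n) (Fin n) ℝ) (b : Fin n → ℝ)
    (σ : Finset (Fin n)) (j : Fin n) : ℝ :=
  ∑ i ∈ σ, (W j i - if j = i then 1 else 0) * |cramerDet W b σ i|

/-!
Enumerating the cycle as `v : Fin m → σ`, the CTLN matrix on `σ` is the circulant matrix
`W_σ = -(1+δ) J + (1+δ) I + (ε+δ) S`, with `J` the all-ones matrix and `S` the cyclic shift.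

Since `I - W_σ` has constant row sums `-(2δ+ε)` once `J` is removed, the rank-one part factors out,
and only the identity and the rotation survive in the Leibniz expansion of the rest:
`det (I - W_σ) = ((-δ)^m - (ε+δ)^m) (1 - m(1+δ)/(2δ+ε))`, a product of two negative numbers.
Hence `I - W_σ` is invertible, so the only possible fixed point supported on `σ` is the uniform one,
`x = θ / (1 - r)` on `σ`, where `r` is the common row sum of `W_σ`. It is a fixed point exactly when
`∑_{j ∈ σ} W_kj + 1 ≤ r` for every `k ∉ σ`, i.e. `(ε+δ) · #{i ∈ σ | i → k} ≤ 2δ + ε`, i.e. `k`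
receives at most one edge from `σ`.

Every additive character `ψ` of `ℤ/m` is an eigenvector of every circulant matrix; for `-I + W_σ`
and `ψ ≠ 1` the eigenvalue is `δ + (ε+δ) ψ(-1)`. For `ψ(-1) = e^{-2πi/m}` its real part is
`δ + (ε+δ) cos(2π/m) ≥ (δ - ε)/2 > 0`, because `m ≥ 3`.
-/

theorem Fin.one_ne_zero_of_two_le {m : ℕ} [NeZero m] (hm : 2 ≤ m) : (1 : Fin m) ≠ 0 := by
  rw [Ne, Fin.one_eq_zero_iff]
  omega

theorem Fin.cyclic_induction {m : ℕ} [NeZero m] {P : Fin m → Prop} {q₀ : Fin m} (h₀ : P q₀)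
    (hsucc : ∀ q, P q → P (q + 1)) (p : Fin m) : P p := by
  open Fin.NatCast in
  have key : ∀ k : ℕ, P (q₀ + k) := by
    intro k
    induction k with
    | zero => simpa using h₀
    | succ k ih => simpa [Nat.cast_succ, ← add_assoc] using hsucc _ ih
  simpa using key (p - q₀).val

theorem Equiv.Perm.eq_one_or_eq_addRight_one {m : ℕ} [NeZero m] (h10 : (1 : Fin m) ≠ 0)
    {π : Perm (Fin m)} (h : ∀ q, π q = q ∨ π q = q + 1) : π = 1 ∨ π = Equiv.addRight 1 := by
  by_cases hshift : ∃ q, π q = q + 1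
  · obtain ⟨q₀, hq₀⟩ := hshift
    refine Or.inr (Equiv.ext (Fin.cyclic_induction (P := fun q => π q = q + 1) hq₀ fun q hq => ?_))
    refine (h (q + 1)).resolve_left fun hfix => h10 ?_
    simpa using π.injective (hfix.trans hq.symm)
  · push Not at hshift
    exact Or.inl (Equiv.ext fun q => (h q).resolve_right (hshift q))

section MatrixFacts

variable {R : Type*} [CommRing R] {ι : Type*} [Fintype ι] [DecidableEq ι]

theorem Matrix.det_one_add_of_const (a : R) :
    (1 + of fun _ _ : ι => a).det = 1 + Fintype.card ι * a := by
  have hrankOne : (of fun _ _ : ι => a) =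
      replicateCol (Fin 1) (fun _ : ι => a) * replicateRow (Fin 1) (fun _ : ι => (1 : R)) := by
    ext
    simp [mul_apply]
  rw [hrankOne, det_one_add_mul_comm, det_unique]
  simp [mul_apply]

theorem Matrix.isRoot_charpoly_of_mulVec_eq_smul [IsDomain R] {M : Matrix ι ι R} {u : ι → R}
    {μ : R} (hu : u ≠ 0) (h : M *ᵥ u = μ • u) : M.charpoly.IsRoot μ := by
  rw [← charpoly_toLin', ← Module.End.hasEigenvalue_iff_isRoot_charpoly]
  exact Module.End.hasEigenvalue_of_hasEigenvector
    ⟨Module.End.mem_eigenspace_iff.2 (by simpa using h), hu⟩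

theorem Matrix.sum_circulant_row {G : Type*} [AddCommGroup G] [Fintype G] (w : G → R) (p : G) :
    ∑ q, circulant w p q = ∑ k, w k :=
  Fintype.sum_equiv (Equiv.subLeft p) _ _ fun _ => rfl

theorem Matrix.circulant_mulVec_addChar {G : Type*} [AddCommGroup G] [Fintype G] (w : G → R)
    (ψ : AddChar G R) : circulant w *ᵥ ψ = (∑ k, w k * ψ (-k)) • ⇑ψ := by
  ext p
  simp only [mulVec, dotProduct, circulant_apply, Pi.smul_apply, smul_eq_mul, Finset.sum_mul]
  refine Fintype.sum_equiv (Equiv.subLeft p) _ _ fun q => ?_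
  rw [Equiv.subLeft_apply, mul_assoc, ← AddChar.map_add_eq_mul, neg_sub, sub_add_cancel]

end MatrixFacts

section CycleCirculant

variable {R : Type*} [CommRing R] {m : ℕ} [NeZero m]

/-- `circulant (cycleVec m c x y) = c • J + x • 1 + y • S`, where `J` is the all-ones matrix and
`S` the cyclic shift `e_q ↦ e_(q+1)`. -/
def cycleVec (m : ℕ) [NeZero m] (c x y : R) : Fin m → R :=
  fun k => c + (Pi.single 0 x : Fin m → R) k + (Pi.single 1 y : Fin m → R) k

theorem circulant_cycleVec_apply (c x y : R) (p q : Fin m) :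
    circulant (cycleVec m c x y) p q =
      c + (if p = q then x else 0) + (if p = q + 1 then y else 0) := by
  simp [cycleVec, circulant_apply, Pi.single_apply, sub_eq_iff_eq_add, add_comm]

theorem sum_cycleVec (c x y : R) : ∑ k, cycleVec m c x y k = m * c + x + y := by
  simp [cycleVec, Finset.sum_add_distrib]

theorem one_sub_circulant_cycleVec (c x y : R) :
    1 - circulant (cycleVec m c x y) = circulant (cycleVec m (-c) (1 - x) (-y)) := by
  ext p q
  simp only [Matrix.sub_apply, one_apply, circulant_cycleVec_apply]
  split_ifs <;> ring

theorem neg_one_add_circulant_cycleVec (c x y : R) :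
    -1 + circulant (cycleVec m c x y) = circulant (cycleVec m c (x - 1) y) := by
  ext p q
  simp only [Matrix.add_apply, Matrix.neg_apply, one_apply, circulant_cycleVec_apply]
  split_ifs <;> ring

theorem map_circulant_cycleVec {S : Type*} [CommRing S] (f : R →+* S) (c x y : R) :
    (circulant (cycleVec m c x y)).map f = circulant (cycleVec m (f c) (f x) (f y)) := by
  ext p q
  simp only [map_apply, circulant_cycleVec_apply]
  split_ifs <;> simp

theorem circulant_cycleVec_mulVec_addChar [IsDomain R] (c x y : R) {ψ : AddChar (Fin m) R}
    (hψ : ψ ≠ 1) : circulant (cycleVec m c x y) *ᵥ ψ = (x + y * ψ (-1)) • ⇑ψ := by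
  have hsum : ∑ k : Fin m, ψ (-k) = 0 := by
    rw [← AddChar.sum_eq_zero_of_ne_one hψ]
    exact Fintype.sum_equiv (Equiv.neg _) _ _ fun _ => rfl
  rw [circulant_mulVec_addChar]
  congr 1
  simp [cycleVec, add_mul, Finset.sum_add_distrib, ← Finset.mul_sum, hsum, Pi.single_apply]

theorem isRoot_charpoly_circulant_cycleVec [IsDomain R] (c x y : R) {ψ : AddChar (Fin m) R}
    (hψ : ψ ≠ 1) : (circulant (cycleVec m c x y)).charpoly.IsRoot (x + y * ψ (-1)) :=
  isRoot_charpoly_of_mulVec_eq_smul (fun h => by simpa using congrFun h 0)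
    (circulant_cycleVec_mulVec_addChar c x y hψ)

theorem det_circulant_cycleVec_zero (h10 : (1 : Fin m) ≠ 0) (x y : R) :
    (circulant (cycleVec m 0 x y)).det = x ^ m - (-y) ^ m := by
  obtain ⟨m', rfl⟩ : ∃ m', m = m' + 1 := ⟨m - 1, (Nat.succ_pred_eq_of_ne_zero (NeZero.ne m)).symm⟩
  have hshift : Equiv.addRight (1 : Fin (m' + 1)) = finRotate (m' + 1) :=
    Equiv.ext fun q => (finRotate_apply q).symm
  have hne : (1 : Equiv.Perm (Fin (m' + 1))) ≠ Equiv.addRight 1 := fun h =>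
    h10 (by simpa using (congrArg (· 0) h).symm)
  -- In the Leibniz expansion only the identity and the rotation `q ↦ q + 1` survive.
  rw [det_apply', ← Finset.sum_subset (Finset.subset_univ {1, Equiv.addRight 1}),
    Finset.sum_pair hne]
  · simp only [circulant_cycleVec_apply]
    simp [hshift, sign_finRotate, h10]
    ring
  · intro π _ hπ
    simp only [Finset.mem_insert, Finset.mem_singleton, not_or] at hπ
    obtain ⟨q, hq⟩ : ∃ q, π q ≠ q ∧ π q ≠ q + 1 := by
      by_contra! h
      exact (Equiv.Perm.eq_one_or_eq_addRight_one h10 fun q => or_iff_not_imp_left.2 (h q)).elim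
        hπ.1 hπ.2
    rw [Finset.prod_eq_zero (Finset.mem_univ q)]
    · simp
    · simp only [circulant_cycleVec_apply]
      simp [hq.1, hq.2]

theorem det_circulant_cycleVec {K : Type*} [Field K] (h10 : (1 : Fin m) ≠ 0) (c x y : K)
    (hxy : x + y ≠ 0) :
    (circulant (cycleVec m c x y)).det = (x ^ m - (-y) ^ m) * (1 + m * (c / (x + y))) := by
  -- `circulant (cycleVec m 0 x y)` has all row sums `x + y`, so it maps `J` to `(x + y) • J`.
  have hfactor : circulant (cycleVec m c x y) =
      circulant (cycleVec m 0 x y) * (1 + of fun _ _ => c / (x + y)) := by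
    ext p q
    rw [Matrix.mul_add, Matrix.mul_one, Matrix.add_apply, mul_apply]
    simp only [of_apply, ← Finset.sum_mul, sum_circulant_row, sum_cycleVec]
    simp only [circulant_cycleVec_apply]
    field_simp
    ring
  rw [hfactor, det_mul, det_circulant_cycleVec_zero h10, det_one_add_of_const, Fintype.card_fin]

end CycleCirculant

open Real in
theorem exists_addChar_ne_one_neg_half_le_re {m : ℕ} [NeZero m] (hm : 3 ≤ m) :
    ∃ ψ : AddChar (Fin m) ℂ, ψ ≠ 1 ∧ -1 / 2 ≤ (ψ (-1)).re := by
  let ψ : AddChar (Fin m) ℂ :=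
    ZMod.stdAddChar.compAddMonoidHom (AddMonoidHom.mk' (ZMod.finEquiv m) (map_add _))
  have hψ : ψ (-1) = Complex.exp ((-(2 * π / m) : ℝ) * Complex.I) := by
    have := ZMod.stdAddChar_coe (N := m) (-1)
    simp [ψ] at this ⊢
    rw [this]
    congr 1
    ring
  refine ⟨ψ, fun h => ?_, ?_⟩
  · have h1 : ZMod.stdAddChar (ZMod.finEquiv m (-1)) = ZMod.stdAddChar (0 : ZMod m) := by
      rw [AddChar.map_zero_eq_one]
      exact congrArg (· (-1)) h
    have h2 := (ZMod.finEquiv m).injective ((ZMod.injective_stdAddChar h1).trans (map_zero _).symm)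
    rw [neg_eq_zero, Fin.one_eq_zero_iff] at h2
    omega
  · rw [hψ, Complex.exp_ofReal_mul_I_re, Real.cos_neg, neg_div, ← cos_pi_div_three, ← cos_pi_sub]
    have hm' : (3 : ℝ) ≤ m := by exact_mod_cast hm
    apply cos_le_cos_of_nonneg_of_le_pi (by positivity) (by linarith [pi_pos])
    rw [div_le_iff₀ (by positivity)]
    nlinarith [pi_pos]

section TLN

variable {n : ℕ} {W : Matrix (Fin n) (Fin n) ℝ} {b : Fin n → ℝ} {σ : Finset (Fin n)}

theorem memFP_univ_iff :
    memFP W b univ σ ↔ ∃ x : Fin n → ℝ,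
      (∀ i ∈ σ, 0 < x i ∧ ∑ j ∈ σ, W i j * x j + b i = x i) ∧
      ∀ k ∉ σ, ∑ j ∈ σ, W k j * x j + b k ≤ 0 := by
  have hsum {x : Fin n → ℝ} (hx : ∀ j ∉ σ, x j = 0) (i : Fin n) :
      ∑ j, W i j * x j = ∑ j ∈ σ, W i j * x j :=
    (sum_subset (subset_univ σ) fun j _ hj => by rw [hx j hj, mul_zero]).symm
  constructor
  · rintro ⟨x, ⟨hfp, -⟩, hsupp⟩
    have hzero : ∀ j ∉ σ, x j = 0 := fun j hj =>
      le_antisymm (not_lt.1 fun h => hj ((hsupp j).1 h)) (hfp j (mem_univ j) ▸ le_max_left _ _)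
    have hfp' : ∀ i, x i = max 0 (∑ j ∈ σ, W i j * x j + b i) := fun i => by
      rw [hfp i (mem_univ i), hsum hzero]
    refine ⟨x, fun i hi => ⟨(hsupp i).2 hi, ?_⟩, fun k hk => ?_⟩
    · have hpos := (hsupp i).2 hi
      rw [hfp' i] at hpos ⊢
      exact (max_eq_right (lt_max_iff.1 hpos |>.resolve_left (lt_irrefl 0)).le).symm
    · exact max_eq_left_iff.1 ((hfp' k).symm.trans (hzero k hk))
  · rintro ⟨x, hon, hoff⟩
    have hsum' : ∀ i, ∑ j, W i j * (if j ∈ σ then x j else 0) = ∑ j ∈ σ, W i j * x j := fun i => by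
      rw [hsum (fun j hj => if_neg hj)]
      exact sum_congr rfl fun j hj => by rw [if_pos hj]
    refine ⟨fun i => if i ∈ σ then x i else 0, ⟨fun i _ => ?_, fun i hi => absurd (mem_univ i) hi⟩,
      fun i => ?_⟩
    · rw [hsum']
      dsimp only
      by_cases hi : i ∈ σ
      · rw [if_pos hi, (hon i hi).2, max_eq_right (hon i hi).1.le]
      · rw [if_neg hi, max_eq_left (hoff i hi)]
    · by_cases hi : i ∈ σ <;> simp [hi, (hon i _).1]

theorem eqOn_of_detIW_ne_zero (hdet : detIW W σ ≠ 0) {x y : Fin n → ℝ}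
    (hx : ∀ i ∈ σ, ∑ j ∈ σ, W i j * x j + b i = x i)
    (hy : ∀ i ∈ σ, ∑ j ∈ σ, W i j * y j + b i = y i) : Set.EqOn x y σ := by
  have hker : (1 - W.submatrix Subtype.val Subtype.val : Matrix σ σ ℝ) *ᵥ
      (fun i : σ => x i - y i) = 0 := by
    ext i
    have hsum : ∀ z : Fin n → ℝ, ∑ j : σ, W i j * z j = ∑ j ∈ σ, W i j * z j := fun z =>
      sum_coe_sort σ fun j => W i j * z j
    rw [sub_mulVec, one_mulVec, Pi.sub_apply, Pi.zero_apply, sub_eq_zero]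
    simp only [mulVec, dotProduct, submatrix_apply, mul_sub, sum_sub_distrib, hsum]
    linarith [hx i i.2, hy i i.2]
  intro i hi
  exact sub_eq_zero.1 (congrFun (eq_zero_of_mulVec_eq_zero hdet hker) ⟨i, mem_coe.1 hi⟩)

theorem memFP_iff_of_rowSum_eq {θ r : ℝ} (hθ : 0 < θ) (hr : r < 1)
    (hrow : ∀ i ∈ σ, ∑ j ∈ σ, W i j = r) (hdet : detIW W σ ≠ 0) :
    memFP W (fun _ => θ) univ σ ↔ ∀ k ∉ σ, ∑ j ∈ σ, W k j + 1 ≤ r := by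
  set c := θ / (1 - r)
  have hc : 0 < c := div_pos hθ (sub_pos.2 hr)
  have hθc : θ = (1 - r) * c := by
    simp only [c]
    field_simp [(sub_pos.2 hr).ne']
  have hon : ∀ i ∈ σ, ∑ j ∈ σ, W i j * c + θ = c := fun i hi => by
    rw [← sum_mul, hrow i hi, hθc]
    ring
  have hoff : ∀ k, ∑ j ∈ σ, W k j * c + θ ≤ 0 ↔ ∑ j ∈ σ, W k j + 1 ≤ r := fun k => by
    rw [← sum_mul, hθc, ← sub_nonpos, ← sub_nonpos (b := r)]
    constructor <;> intro h <;> nlinarith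
  rw [memFP_univ_iff]
  constructor
  · rintro ⟨x, hx, hxoff⟩ k hk
    have hxc := eqOn_of_detIW_ne_zero hdet (fun i hi => (hx i hi).2) (y := fun _ => c) hon
    have hxk : ∑ j ∈ σ, W k j * x j = ∑ j ∈ σ, W k j * c :=
      sum_congr rfl fun j hj => by rw [hxc hj]
    rw [← hoff, ← hxk]
    exact hxoff k hk
  · exact fun h => ⟨fun _ => c, fun i hi => ⟨hc, hon i hi⟩, fun k hk => (hoff k).2 (h k hk)⟩

theorem detIW_eq_det_one_sub_submatrix {ι : Type*} [Fintype ι] [DecidableEq ι] (e : ι ≃ σ) :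
    detIW W σ = (1 - W.submatrix (fun i => (e i : Fin n)) (fun i => e i)).det := by
  rw [detIW, ← det_submatrix_equiv_self e]
  congr 1
  ext i j
  simp [one_apply, e.injective.eq_iff]

end TLN

section CTLN

variable {n : ℕ} {G : Fin n → Fin n → Prop} [DecidableRel G] {ε δ : ℝ} {σ : Finset (Fin n)}

theorem sum_ctlnW_of_notMem {k : Fin n} (hk : k ∉ σ) :
    ∑ j ∈ σ, ctlnW G ε δ k j = (ε + δ) * #{j ∈ σ | G j k} - (1 + δ) * #σ := by
  have hterm : ∀ j ∈ σ, ctlnW G ε δ k j = (ε + δ) * (if G j k then 1 else 0) - (1 + δ) :=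
    fun j hj => by
      simp only [ctlnW, of_apply, if_neg (ne_of_mem_of_not_mem hj hk).symm]
      split_ifs <;> ring
  rw [sum_congr rfl hterm, sum_sub_distrib, ← mul_sum, sum_boole, sum_const, nsmul_eq_mul]
  ring

variable {m : ℕ} [NeZero m] (e : Fin m ≃ σ)

theorem ctlnW_submatrix_eq_circulant_of_isCycle (hm : 2 ≤ m)
    (hcyc : ∀ p q, G (e p) (e q) ↔ q = p + 1) :
    (ctlnW G ε δ).submatrix (fun p => (e p : Fin n)) (fun p => e p) =
      circulant (cycleVec m (-1 - δ) (1 + δ) (ε + δ)) := by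
  ext p q
  rw [submatrix_apply, circulant_cycleVec_apply]
  simp only [ctlnW, of_apply, Subtype.val_injective.eq_iff, e.injective.eq_iff, hcyc]
  have hne : ∀ q : Fin m, q ≠ q + 1 := fun q h =>
    Fin.one_ne_zero_of_two_le hm (by simpa using h.symm)
  split_ifs with h₁ h₂ <;> first | exact absurd (h₁.symm.trans h₂) (hne q) | ring

theorem sum_ctlnW_of_mem_of_isCycle (hm : 2 ≤ m) (hcyc : ∀ p q, G (e p) (e q) ↔ q = p + 1)
    {i : Fin n} (hi : i ∈ σ) :
    ∑ j ∈ σ, ctlnW G ε δ i j = m * (-1 - δ) + (1 + δ) + (ε + δ) := by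
  obtain ⟨p, rfl⟩ : ∃ p, (e p : Fin n) = i :=
    ⟨e.symm ⟨i, hi⟩, congrArg Subtype.val (e.apply_symm_apply _)⟩
  rw [← sum_coe_sort, ← e.sum_comp, ← sum_cycleVec,
    ← sum_circulant_row (cycleVec m (-1 - δ) (1 + δ) (ε + δ)) p,
    ← ctlnW_submatrix_eq_circulant_of_isCycle e hm hcyc]
  rfl

theorem detIW_ctlnW_pos_of_isCycle (hm : 2 ≤ m) (hcyc : ∀ p q, G (e p) (e q) ↔ q = p + 1)
    (hδ : 0 < δ) (hε : 0 < ε) (hε1 : ε < 1) : 0 < detIW (ctlnW G ε δ) σ := by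
  rw [detIW_eq_det_one_sub_submatrix e, ctlnW_submatrix_eq_circulant_of_isCycle e hm hcyc,
    one_sub_circulant_cycleVec, det_circulant_cycleVec (Fin.one_ne_zero_of_two_le hm) _ _ _
      (by linarith)]
  have hpow : (1 - (1 + δ)) ^ m - (-(-(ε + δ))) ^ m < 0 := by
    have h1 : (-δ) ^ m ≤ δ ^ m :=
      (le_abs_self _).trans_eq (by rw [abs_pow, abs_neg, abs_of_pos hδ])
    have h2 : δ ^ m < (ε + δ) ^ m := pow_lt_pow_left₀ (by linarith) hδ.le (NeZero.ne m)
    simp only [sub_add_cancel_left, neg_neg]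
    linarith
  have hfrac : 1 + m * (-(-1 - δ) / (1 - (1 + δ) + -(ε + δ))) < 0 := by
    have hm' : (2 : ℝ) ≤ m := by exact_mod_cast hm
    rw [show 1 - (1 + δ) + -(ε + δ) = -(2 * δ + ε) by ring, div_neg, mul_neg, ← sub_eq_add_neg,
      sub_neg, mul_div_assoc', lt_div_iff₀ (by linarith)]
    nlinarith
  exact mul_pos_of_neg_of_neg hpow hfrac

theorem memFP_ctlnW_iff_of_isCycle (hm : 2 ≤ m) (hcyc : ∀ p q, G (e p) (e q) ↔ q = p + 1)
    {θ : ℝ} (hθ : 0 < θ) (hδ : 0 < δ) (hε : 0 < ε) (hε1 : ε < 1) :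
    memFP (ctlnW G ε δ) (fun _ => θ) univ σ ↔ ∀ k ∉ σ, #{i ∈ σ | G i k} ≤ 1 := by
  have hm' : (2 : ℝ) ≤ m := by exact_mod_cast hm
  rw [memFP_iff_of_rowSum_eq hθ (by nlinarith) (fun i => sum_ctlnW_of_mem_of_isCycle e hm hcyc)
    (detIW_ctlnW_pos_of_isCycle e hm hcyc hδ hε hε1).ne']
  refine forall₂_congr fun k hk => ?_
  have hcard : #σ = m := by simpa using (Fintype.card_congr e).symm
  rw [sum_ctlnW_of_notMem hk, hcard]
  -- the off-condition reads `(ε + δ) · #{i ∈ σ | G i k} ≤ 2δ + ε`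
  constructor
  · intro h
    by_contra! hd
    have hd' : (2 : ℝ) ≤ #{j ∈ σ | G j k} := by exact_mod_cast hd
    nlinarith
  · intro h
    have hd' : (#{j ∈ σ | G j k} : ℝ) ≤ 1 := by exact_mod_cast h
    nlinarith

theorem exists_isRoot_charpoly_re_pos_of_isCycle (hm : 3 ≤ m)
    (hcyc : ∀ p q, G (e p) (e q) ↔ q = p + 1) (hε : 0 < ε) (hεδ : ε < δ) :
    ∃ μ : ℂ, ((-1 + (ctlnW G ε δ).submatrix Subtype.val Subtype.val :
      Matrix σ σ ℝ).map Complex.ofReal).charpoly.IsRoot μ ∧ 0 < μ.re := by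
  obtain ⟨ψ, hψ, hre⟩ := exists_addChar_ne_one_neg_half_le_re hm
  have hre' : (ε + δ) * (-1 / 2) ≤ (ε + δ) * (ψ (-1)).re :=
    mul_le_mul_of_nonneg_left hre (by linarith)
  refine ⟨δ + (ε + δ) * ψ (-1), ?_, by simp; linarith⟩
  rw [← charpoly_reindex e.symm]
  convert isRoot_charpoly_circulant_cycleVec ((-1 - δ : ℝ) : ℂ) δ (ε + δ) hψ using 2
  calc reindex e.symm e.symm
        ((-1 + (ctlnW G ε δ).submatrix Subtype.val Subtype.val).map Complex.ofReal)
      = (-1 + (ctlnW G ε δ).submatrix (fun p => (e p : Fin n)) (fun p => e p)).map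
          Complex.ofRealHom := by
        ext p q
        simp [one_apply, e.injective.eq_iff]
    _ = _ := by
        rw [ctlnW_submatrix_eq_circulant_of_isCycle e (by omega) hcyc,
          neg_one_add_circulant_cycleVec, map_circulant_cycleVec]
        simp

end CTLN

theorem cycles_rule_general {n m : ℕ} [NeZero m] (hm : 3 ≤ m)
    (G : Fin n → Fin n → Prop) [DecidableRel G]
    (ε δ θ : ℝ)
    (hθ : 0 < θ) (hδ : 0 < δ) (hε : 0 < ε) (hεδ : ε < δ / (δ + 1))
    (W : Matrix (Fin n) (Fin n) ℝ) (hWdef : W = ctlnW G ε δ)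
    (b : Fin n → ℝ) (hbdef : b = fun _ => θ)
    (σ : Finset (Fin n)) (hcard : σ.card = m)
    (v : Fin m → Fin n) (hvinj : Function.Injective v) (hvmem : ∀ p, v p ∈ σ)
    (hcyc : ∀ p q : Fin m, G (v p) (v q) ↔ q = p + 1) :
    (memFP W b Finset.univ σ ↔
      ∀ k ∉ σ, (σ.filter (fun i => G i k)).card ≤ 1) ∧
    (memFP W b Finset.univ σ →
      (∃ μ : ℂ, (Matrix.charpoly
          (((-(1 : Matrix {x // x ∈ σ} {x // x ∈ σ} ℝ)
              + W.submatrix Subtype.val Subtype.val)).map Complex.ofReal)).IsRoot μ ∧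
          0 < μ.re) ∧
      0 < detIW W σ) := by
  subst hWdef hbdef
  have hεδ' : ε < δ := hεδ.trans_le (div_le_self hδ.le (by linarith))
  have hε1 : ε < 1 := hεδ.trans ((div_lt_one (by linarith)).2 (by linarith))
  let e : Fin m ≃ σ := Equiv.ofBijective (fun p => ⟨v p, hvmem p⟩)
    ((Fintype.bijective_iff_injective_and_card _).2
      ⟨fun p q h => hvinj (congrArg Subtype.val h), by simp [hcard]⟩)
  exact ⟨memFP_ctlnW_iff_of_isCycle e (by omega) hcyc hθ hδ hε hε1, fun _ =>
    ⟨exists_isRoot_charpoly_re_pos_of_isCycle e hm hcyc hε hεδ',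
      detIW_ctlnW_pos_of_isCycle e (by omega) hcyc hδ hε hε1⟩⟩

/-- **Cycles rule.** Let `G` be a simple directed graph on `[n]` with CTLN parameters in
the legal range, and let `σ` with `|σ| = m ≥ 3` be a cycle: its vertices can be
enumerated `v 0, …, v (m−1)` so that the edges of `G|_σ` are exactly the consecutive ones
`v p → v (p+1)` (indices mod `m`). Then `σ ∈ FP(G)` iff every `k ∉ σ` receives at most
one edge from `σ`. Furthermore, when `σ ∈ FP(G)`, the matrix `−I + W_σ` has an
eigenvalue with positive real part (the fixed point is unstable), yet
`det(I − W_σ) > 0`. -/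
theorem cycles_rule {n m : ℕ} [NeZero m] (hm : 3 ≤ m)
    (G : Fin n → Fin n → Prop) [DecidableRel G]
    (hGirr : ∀ i, ¬ G i i) (ε δ θ : ℝ)
    (hθ : 0 < θ) (hδ : 0 < δ) (hε : 0 < ε) (hεδ : ε < δ / (δ + 1))
    (W : Matrix (Fin n) (Fin n) ℝ) (hWdef : W = ctlnW G ε δ)
    (b : Fin n → ℝ) (hbdef : b = fun _ => θ)
    (σ : Finset (Fin n)) (hcard : σ.card = m)
    (v : Fin m → Fin n) (hvinj : Function.Injective v) (hvmem : ∀ p, v p ∈ σ)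
    (hcyc : ∀ p q : Fin m, G (v p) (v q) ↔ q = p + 1) :
    (memFP W b Finset.univ σ ↔
      ∀ k ∉ σ, (σ.filter (fun i => G i k)).card ≤ 1) ∧
    (memFP W b Finset.univ σ →
      (∃ μ : ℂ, (Matrix.charpoly
          (((-(1 : Matrix {x // x ∈ σ} {x // x ∈ σ} ℝ)
              + W.submatrix Subtype.val Subtype.val)).map Complex.ofReal)).IsRoot μ ∧
          0 < μ.re) ∧
      0 < detIW W σ) :=
  cycles_rule_general hm G ε δ θ hθ hδ hε hεδ W hWdef b hbdef σ hcard v hvinj hvmem hcyc
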